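/- arXiv:2502.14047 — 6 statements merged into one kernel-verified Lean document; each statement's English description precedes it below -/
import Mathlib

section
/- Let μ be a probability measure on X1 × X2 and let (x1^i, x2^i), i = 1,…,n, be i.i.d. samples from μ. Let K1 : X1 × X1 → ℝ and K2 : X2 × X2 → ℝ be measurable symmetric kernels with |K1| ≤ C1 and |K2| ≤ C2 pointwise, and set Â12 = (1/n²) Σ_{i,j=1}^n K1(x1^i, x1^j) K2(x2^i, x2^j). Then for every ε > 0, P( |Â12 − E[Â12]| ≥ ε ) ≤ 2·exp( − n·ε² / (32·C1²·C2²) ); equivalently, for every δ ∈ (0,1), with probability at least 1 − δ, |Â12 − E[Â12]| ≤ C1·C2·√((32/n)·log(2/δ)). -/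
/-!
`Â₁₂` is the V-statistic of the kernel `((a, u), (b, v)) ↦ K1 a b * K2 u v`, which is bounded
by `C := C1 * C2`. Moving one sample point changes only one row and one column of the `n × n`
Gram matrix, so `Â₁₂` has bounded differences `4C/n`. McDiarmid's inequality, proved in
sub-Gaussian form by peeling off one coordinate at a time (Hoeffding's lemma on the slice, then
Fubini), makes `Â₁₂ - E Â₁₂` sub-Gaussian, and Chernoff's bound for both signs gives the tails.
-/

open MeasureTheory ProbabilityTheory Real
open scoped NNReal

namespace ProbabilityTheory

variable {Ω : Type*} [MeasurableSpace Ω] {μ : Measure Ω}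

theorem hasSubgaussianMGF_sub_integral_of_sub_le [IsProbabilityMeasure μ] {h : Ω → ℝ}
    (hm : AEMeasurable h μ) {c : ℝ≥0} (hc : ∀ a b, h a - h b ≤ c) :
    HasSubgaussianMGF (fun a => h a - ∫ a, h a ∂μ) ((c / 2) ^ 2) μ := by
  have hΩ := nonempty_of_isProbabilityMeasure μ
  have hbdd : BddBelow (Set.range h) :=
    ⟨h hΩ.some - c, Set.forall_mem_range.2 fun a => by linarith [hc hΩ.some a]⟩
  have hIcc : ∀ a, h a ∈ Set.Icc (⨅ b, h b) ((⨅ b, h b) + c) := fun a =>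
    ⟨ciInf_le hbdd a, by linarith [le_ciInf fun b => (by linarith [hc a b] : h a - c ≤ h b)]⟩
  simpa using hasSubgaussianMGF_of_mem_Icc hm (ae_of_all μ hIcc)

theorem hasSubgaussianMGF_prod_of_slices {β : Type*} [MeasurableSpace β] {ν : Measure β}
    [SFinite μ] [SFinite ν] {F : Ω × β → ℝ} {g : β → ℝ} {c₁ c₂ : ℝ≥0}
    (hint : ∀ t, Integrable (fun p => exp (t * F p)) (μ.prod ν))
    (hslice : ∀ y, HasSubgaussianMGF (fun a => F (a, y) - g y) c₁ μ)
    (hg : HasSubgaussianMGF g c₂ ν) :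
    HasSubgaussianMGF F (c₁ + c₂) (μ.prod ν) where
  integrable_exp_mul := hint
  mgf_le t := by
    have hsplit : ∀ y, ∫ a, exp (t * F (a, y)) ∂μ =
        mgf (fun a => F (a, y) - g y) μ t * exp (t * g y) := by
      intro y
      rw [mgf, ← integral_mul_const]
      congr 1 with a
      rw [← exp_add]; ring_nf
    calc mgf F (μ.prod ν) t = ∫ y, ∫ a, exp (t * F (a, y)) ∂μ ∂ν :=
          integral_prod_symm _ (hint t)
      _ ≤ ∫ y, exp (c₁ * t ^ 2 / 2) * exp (t * g y) ∂ν := by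
        refine integral_mono_of_nonneg
          (ae_of_all _ fun y => integral_nonneg fun a => (exp_pos _).le)
          ((hg.integrable_exp_mul t).const_mul _) (ae_of_all _ fun y => ?_)
        dsimp only
        rw [hsplit]
        exact mul_le_mul_of_nonneg_right ((hslice y).mgf_le t) (exp_pos _).le
      _ = exp (c₁ * t ^ 2 / 2) * mgf g ν t := integral_const_mul _ _
      _ ≤ exp (c₁ * t ^ 2 / 2) * exp (c₂ * t ^ 2 / 2) := by gcongr; exact hg.mgf_le t
      _ = exp (↑(c₁ + c₂) * t ^ 2 / 2) := by rw [← exp_add]; push_cast; ring_nf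

theorem HasSubgaussianMGF.of_measurePreserving {β : Type*} [MeasurableSpace β] {ν : Measure β}
    {e : Ω ≃ᵐ β} (he : MeasurePreserving e μ ν) {X : β → ℝ} {c : ℝ≥0}
    (h : HasSubgaussianMGF (X ∘ e) c μ) : HasSubgaussianMGF X c ν := by
  rw [← he.symm.map_eq] at h
  simpa [Function.comp_def] using h.of_map e.symm.measurable.aemeasurable

theorem abs_integral_sub_integral_le [IsProbabilityMeasure μ] {f g : Ω → ℝ}
    (hf : Integrable f μ) (hg : Integrable g μ) {C : ℝ} (h : ∀ a, |f a - g a| ≤ C) :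
    |∫ a, f a ∂μ - ∫ a, g a ∂μ| ≤ C := by
  simpa [integral_sub hf hg] using norm_integral_le_of_norm_le_const (μ := μ)
    (f := fun a => f a - g a) (ae_of_all _ h)

theorem hasSubgaussianMGF_sub_integral_prod [IsProbabilityMeasure μ] {β : Type*}
    [MeasurableSpace β] {ν : Measure β} [IsProbabilityMeasure ν] {F : Ω × β → ℝ}
    (hF : Measurable F) {M : ℝ} (hFM : ∀ p, |F p| ≤ M) {c₀ c : ℝ≥0}
    (hF_slice : ∀ a b y, F (a, y) - F (b, y) ≤ c₀)
    (hG : HasSubgaussianMGF (fun y => ∫ a, F (a, y) ∂μ - ∫ y, ∫ a, F (a, y) ∂μ ∂ν) c ν) :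
    HasSubgaussianMGF (fun p => F p - ∫ p, F p ∂(μ.prod ν)) ((c₀ / 2) ^ 2 + c) (μ.prod ν) := by
  set m := ∫ p, F p ∂(μ.prod ν)
  have hm : ∫ y, ∫ a, F (a, y) ∂μ ∂ν = m :=
    (integral_prod_symm F (.of_bound hF.aestronglyMeasurable M (ae_of_all _ hFM))).symm
  have hFm : ∀ p, F p - m ∈ Set.Icc (-M - m) (M - m) := fun p => by
    constructor <;> linarith [abs_le.1 (hFM p)]
  refine hasSubgaussianMGF_prod_of_slices
    (fun t => integrable_exp_mul_of_mem_Icc (hF.sub_const _).aemeasurable (ae_of_all _ hFm))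
    (fun y => ?_) (hm ▸ hG)
  simpa only [sub_sub_sub_cancel_right] using hasSubgaussianMGF_sub_integral_of_sub_le
    (h := fun a => F (a, y)) (hF.comp measurable_prodMk_right).aemeasurable
    fun a b => hF_slice a b y

/-- **McDiarmid's inequality**, in sub-Gaussian form. -/
theorem hasSubgaussianMGF_sub_integral_pi [IsProbabilityMeasure μ] {n : ℕ}
    {f : (Fin n → Ω) → ℝ} (hf : Measurable f) {M : ℝ} (hfM : ∀ x, |f x| ≤ M)
    (c : Fin n → ℝ≥0) (hfc : ∀ x i a, |f (Function.update x i a) - f x| ≤ c i) :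
    HasSubgaussianMGF (fun x => f x - ∫ x', f x' ∂Measure.pi fun _ => μ)
      (∑ i, (c i / 2) ^ 2) (Measure.pi fun _ => μ) := by
  induction n generalizing M with
  | zero =>
    have hconst : ∀ x, f x - ∫ x', f x' ∂Measure.pi (fun _ => μ) = 0 := fun x => by
      rw [show f = fun _ => f x from funext fun y => congrArg f (Subsingleton.elim y x)]
      simp
    simp only [hconst, Finset.univ_eq_empty, Finset.sum_empty]
    exact .fun_zero
  | succ n ih =>
    set e := (MeasurableEquiv.piFinSuccAbove (fun _ : Fin (n + 1) => Ω) 0).symm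
    have he : MeasurePreserving e (μ.prod (Measure.pi fun _ => μ)) (Measure.pi fun _ => μ) :=
      (measurePreserving_piFinSuccAbove (fun _ => μ) 0).symm
    have he_apply : ∀ p, e p = Fin.cons p.1 p.2 := fun p => by simp [e]; rfl
    set F : Ω × (Fin n → Ω) → ℝ := fun p => f (e p)
    have hF : Measurable F := hf.comp e.measurable
    have hF_int : ∀ y, Integrable (fun a => F (a, y)) μ := fun y =>
      .of_bound (hF.comp measurable_prodMk_right).aestronglyMeasurable M
        (ae_of_all _ fun a => hfM _)
    have hGM : ∀ y, |∫ a, F (a, y) ∂μ| ≤ M := fun y => by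
      simpa using norm_integral_le_of_norm_le_const (μ := μ) (f := fun a => F (a, y))
        (ae_of_all _ fun a => hfM (e (a, y)))
    have hGc : ∀ y i b,
        |∫ a, F (a, Function.update y i b) ∂μ - ∫ a, F (a, y) ∂μ| ≤ c i.succ := fun y i b =>
      abs_integral_sub_integral_le (hF_int _) (hF_int _) fun a => by
        simpa only [F, he_apply, Fin.cons_update] using hfc _ i.succ b
    have hF_slice : ∀ a b y, F (a, y) - F (b, y) ≤ c 0 := fun a b y => (le_abs_self _).trans <| by
      simpa only [F, he_apply, Fin.update_cons_zero] using hfc (Fin.cons b y) 0 a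
    have hstep := hasSubgaussianMGF_sub_integral_prod hF (fun p => hfM _) hF_slice
      (ih hF.stronglyMeasurable.integral_prod_left'.measurable hGM (fun i => c i.succ) hGc)
    rw [Fin.sum_univ_succ, ← he.integral_comp']
    exact .of_measurePreserving (X := fun x => f x - _) he hstep

theorem HasSubgaussianMGF.measure_abs_ge_le [IsFiniteMeasure μ] {X : Ω → ℝ} {c : ℝ≥0}
    (h : HasSubgaussianMGF X c μ) {ε : ℝ} (hε : 0 ≤ ε) :
    μ {ω | ε ≤ |X ω|} ≤ ENNReal.ofReal (2 * exp (-ε ^ 2 / (2 * c))) := by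
  have hsplit : {ω | ε ≤ |X ω|} = {ω | ε ≤ X ω} ∪ {ω | ε ≤ (-X) ω} := by
    ext ω; simp only [le_abs', Set.mem_ofPred_eq, Set.mem_union, Pi.neg_apply, le_neg]; tauto
  have h1 := h.measure_ge_le hε
  have h2 := h.neg.measure_ge_le hε
  rw [hsplit, ← ofReal_measureReal, two_mul]
  refine ENNReal.ofReal_le_ofReal ((measureReal_union_le _ _).trans ?_)
  linarith

theorem HasSubgaussianMGF.measure_abs_gt_sqrt_le [IsFiniteMeasure μ] {X : Ω → ℝ} {c : ℝ≥0}
    (h : HasSubgaussianMGF X c μ) {δ : ℝ} (hδ : 0 < δ) (hδ1 : δ ≤ 1) :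
    μ {ω | √(2 * c * log (2 / δ)) < |X ω|} ≤ ENNReal.ofReal δ := by
  rcases eq_zero_or_pos c with rfl | hc
  · refine (measure_mono_null (fun ω hω => ?_)
      (ae_iff.1 h.ae_eq_zero_of_hasSubgaussianMGF_zero)).trans_le zero_le
    simpa only [NNReal.coe_zero, mul_zero, zero_mul, sqrt_zero, Set.mem_ofPred_eq, abs_pos,
      Pi.zero_apply] using hω
  · have hlog : 0 < log (2 / δ) := log_pos (by rw [lt_div_iff₀ hδ]; linarith)
    set ε := √(2 * c * log (2 / δ))
    have hε : ε ^ 2 = 2 * c * log (2 / δ) := sq_sqrt (by positivity)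
    refine (measure_mono fun ω (hω : ε < |X ω|) => hω.le).trans
      ((h.measure_abs_ge_le (sqrt_nonneg _)).trans_eq ?_)
    rw [hε, neg_div, mul_div_cancel_left₀ _ (by positivity), exp_neg, exp_log (by positivity)]
    congr 1
    field_simp

end ProbabilityTheory

theorem abs_sum_sum_sub_sum_sum_le {ι : Type*} [Fintype ι] [DecidableEq ι] {T T' : ι → ι → ℝ}
    {b : ℝ} (hb : ∀ p q, |T p q - T' p q| ≤ b) (i : ι)
    (hT : ∀ p q, p ≠ i → q ≠ i → T p q = T' p q) :
    |∑ p, ∑ q, T p q - ∑ p, ∑ q, T' p q| ≤ 2 * Fintype.card ι * b := by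
  have hentry : ∀ p q,
      |T p q - T' p q| ≤ b * ((if p = i then 1 else 0) + (if q = i then 1 else 0)) := by
    intro p q
    have hb0 : 0 ≤ b := (abs_nonneg _).trans (hb p q)
    by_cases hp : p = i <;> by_cases hq : q = i
    all_goals simp only [hp, hq, if_true, if_false]
    · linarith [hb i i]
    · simpa using hb i q
    · simpa using hb p i
    · simp [hT p q hp hq]
  calc |∑ p, ∑ q, T p q - ∑ p, ∑ q, T' p q| = |∑ p, ∑ q, (T p q - T' p q)| := by
        simp only [Finset.sum_sub_distrib]
    _ ≤ ∑ p, ∑ q, |T p q - T' p q| := (Finset.abs_sum_le_sum_abs _ _).trans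
        (Finset.sum_le_sum fun p _ => Finset.abs_sum_le_sum_abs _ _)
    _ ≤ ∑ p, ∑ q, b * ((if p = i then 1 else 0) + (if q = i then 1 else 0)) := by
        gcongr with p _ q _
        exact hentry p q
    _ = 2 * Fintype.card ι * b := by
        simp only [mul_add, Finset.sum_add_distrib, mul_ite, mul_one, mul_zero, Finset.sum_ite_eq',
          Finset.mem_univ, if_true, Finset.sum_const, Finset.card_univ, nsmul_eq_mul]
        ring

section VStatistic

variable {α : Type*} {n : ℕ}

noncomputable def vStatistic (k : α → α → ℝ) (x : Fin n → α) : ℝ :=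
  (1 / (n : ℝ) ^ 2) * ∑ i : Fin n, ∑ j : Fin n, k (x i) (x j)

theorem measurable_vStatistic [MeasurableSpace α] {k : α → α → ℝ}
    (hk : Measurable (Function.uncurry k)) : Measurable (vStatistic k (n := n)) := by
  unfold vStatistic
  refine .const_mul (Finset.measurable_sum _ fun i _ => Finset.measurable_sum _ fun j _ => ?_) _
  exact hk.comp (f := fun x : Fin n → α => (x i, x j)) (by fun_prop)

variable {k : α → α → ℝ} {C : ℝ}

theorem abs_vStatistic_le (hC : 0 ≤ C) (hk : ∀ a b, |k a b| ≤ C) (x : Fin n → α) :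
    |vStatistic k x| ≤ C := by
  rcases n.eq_zero_or_pos with rfl | hn
  · simpa [vStatistic] using hC
  have hsum : |∑ i : Fin n, ∑ j : Fin n, k (x i) (x j)| ≤ n ^ 2 * C := calc
    _ ≤ ∑ i : Fin n, ∑ j : Fin n, |k (x i) (x j)| := (Finset.abs_sum_le_sum_abs _ _).trans
        (Finset.sum_le_sum fun p _ => Finset.abs_sum_le_sum_abs _ _)
    _ ≤ ∑ i : Fin n, ∑ j : Fin n, C := by gcongr; exact hk _ _
    _ = n ^ 2 * C := by simp; ring
  rw [vStatistic, abs_mul, abs_of_nonneg (by positivity)]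
  calc _ ≤ 1 / (n : ℝ) ^ 2 * (n ^ 2 * C) := by gcongr
    _ = C := by field_simp

theorem abs_vStatistic_update_sub_le (hk : ∀ a b, |k a b| ≤ C) (x : Fin n → α) (i : Fin n)
    (a : α) : |vStatistic k (Function.update x i a) - vStatistic k x| ≤ 4 * C / n := by
  set y := Function.update x i a
  have hsum := abs_sum_sum_sub_sum_sum_le (T := fun p q => k (y p) (y q))
    (T' := fun p q => k (x p) (x q)) (b := 2 * C)
    (fun p q => (abs_sub _ _).trans (by linarith [hk (y p) (y q), hk (x p) (x q)])) i
    (fun p q hp hq => by simp [y, Function.update_of_ne hp, Function.update_of_ne hq])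
  rw [vStatistic, vStatistic, ← mul_sub, abs_mul, abs_of_nonneg (by positivity)]
  rcases n.eq_zero_or_pos with rfl | hn
  · simp
  calc _ ≤ 1 / (n : ℝ) ^ 2 * (2 * n * (2 * C)) := by gcongr; simpa using hsum
    _ = 4 * C / n := by field_simp; ring

theorem hasSubgaussianMGF_vStatistic [MeasurableSpace α] {μ : Measure α} [IsProbabilityMeasure μ]
    (hk : Measurable (Function.uncurry k)) (hkC : ∀ a b, |k a b| ≤ C) {c : ℝ≥0}
    (hc : 4 * C / n ≤ c) :
    HasSubgaussianMGF
      (fun x => vStatistic k x - ∫ x', vStatistic k x' ∂Measure.pi fun _ : Fin n => μ)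
      (n * (c / 2) ^ 2) (Measure.pi fun _ : Fin n => μ) := by
  obtain ⟨a⟩ := nonempty_of_isProbabilityMeasure μ
  have hX := hasSubgaussianMGF_sub_integral_pi (μ := μ) (measurable_vStatistic hk)
    (abs_vStatistic_le ((abs_nonneg _).trans (hkC a a)) hkC) (fun _ => c)
    fun x i a => (abs_vStatistic_update_sub_le hkC x i a).trans hc
  rwa [Finset.sum_const, Finset.card_fin, nsmul_eq_mul] at hX

end VStatistic

theorem empirical_kernel_alignment_concentration_general
    {X1 X2 : Type*} [MeasurableSpace X1] [MeasurableSpace X2]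
    (μ : Measure (X1 × X2)) [IsProbabilityMeasure μ]
    (K1 : X1 → X1 → ℝ) (K2 : X2 → X2 → ℝ)
    (hK1m : Measurable (Function.uncurry K1)) (hK2m : Measurable (Function.uncurry K2))
    (C1 C2 : ℝ) (hC1 : ∀ a b, |K1 a b| ≤ C1) (hC2 : ∀ a b, |K2 a b| ≤ C2)
    (n : ℕ) (A : (Fin n → X1 × X2) → ℝ)
    (hA : ∀ x, A x = (1 / (n : ℝ) ^ 2) * ∑ i : Fin n, ∑ j : Fin n,
        K1 (x i).1 (x j).1 * K2 (x i).2 (x j).2) :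
    (∀ ε : ℝ, 0 < ε →
      (Measure.pi fun _ : Fin n => μ)
          {x | ε ≤ |A x - ∫ x', A x' ∂(Measure.pi fun _ : Fin n => μ)|}
        ≤ ENNReal.ofReal (2 * Real.exp (-((n : ℝ) * ε ^ 2) / (32 * C1 ^ 2 * C2 ^ 2)))) ∧
    (∀ δ : ℝ, 0 < δ → δ < 1 →
      (Measure.pi fun _ : Fin n => μ)
          {x | C1 * C2 * Real.sqrt ((32 / (n : ℝ)) * Real.log (2 / δ))
              < |A x - ∫ x', A x' ∂(Measure.pi fun _ : Fin n => μ)|}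
        ≤ ENNReal.ofReal δ) := by
  obtain rfl : A = vStatistic fun p q : X1 × X2 => K1 p.1 q.1 * K2 p.2 q.2 := funext hA
  obtain ⟨z⟩ := nonempty_of_isProbabilityMeasure μ
  have hC1₀ : 0 ≤ C1 := (abs_nonneg _).trans (hC1 z.1 z.1)
  have hC2₀ : 0 ≤ C2 := (abs_nonneg _).trans (hC2 z.2 z.2)
  have hC₀ : 0 ≤ C1 * C2 := mul_nonneg hC1₀ hC2₀
  have hK : ∀ p q : X1 × X2, |K1 p.1 q.1 * K2 p.2 q.2| ≤ C1 * C2 := fun p q => by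
    rw [abs_mul]; exact mul_le_mul (hC1 _ _) (hC2 _ _) (abs_nonneg _) hC1₀
  have hKm : Measurable (Function.uncurry fun p q : X1 × X2 => K1 p.1 q.1 * K2 p.2 q.2) :=
    (hK1m.comp (f := fun r : (X1 × X2) × (X1 × X2) => (r.1.1, r.2.1)) (by fun_prop)).mul
      (hK2m.comp (f := fun r : (X1 × X2) × (X1 × X2) => (r.1.2, r.2.2)) (by fun_prop))
  -- McDiarmid with the difference bound `8C/n`, twice the sharp `4C/n`, gives the constant 32.
  set c : ℝ≥0 := ⟨8 * (C1 * C2) / n, by positivity⟩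
  have hX := hasSubgaussianMGF_vStatistic (μ := μ) hKm hK (c := c)
    (div_le_div_of_nonneg_right (by linarith) n.cast_nonneg)
  have hσ : 2 * (((n : ℝ≥0) * (c / 2) ^ 2 : ℝ≥0) : ℝ) = 32 * C1 ^ 2 * C2 ^ 2 / n := by
    push_cast
    rw [show (c : ℝ) = 8 * (C1 * C2) / n from rfl]
    rcases n.eq_zero_or_pos with rfl | hn
    · simp
    · field_simp
      ring
  refine ⟨fun ε hε => ?_, fun δ hδ hδ1 => ?_⟩
  · convert hX.measure_abs_ge_le hε.le using 3
    rw [hσ, div_div_eq_mul_div]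
    congr 1
    ring
  · have hsqrt : √(32 * C1 ^ 2 * C2 ^ 2 / n * log (2 / δ)) =
        C1 * C2 * √(32 / n * log (2 / δ)) := by
      rw [← sqrt_sq hC₀, ← sqrt_mul (sq_nonneg _)]
      ring_nf
    refine (measure_mono fun x hx => ?_).trans (hX.measure_abs_gt_sqrt_le hδ hδ1.le)
    simpa only [Set.mem_ofPred_eq, hσ, hsqrt] using hx

/-- McDiarmid-type concentration of the empirical kernel alignment
`Â₁₂` of two bounded kernels around its expectation, for an i.i.d. sample of size `n`
from a joint probability measure `μ` on `X1 × X2` (modelled by the product measure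
`Measure.pi (fun _ : Fin n => μ)`). Both the `ε`-form and the equivalent `δ`-form are
stated. -/
theorem empirical_kernel_alignment_concentration
    {X1 X2 : Type*} [MeasurableSpace X1] [MeasurableSpace X2]
    (μ : Measure (X1 × X2)) [IsProbabilityMeasure μ]
    (K1 : X1 → X1 → ℝ) (K2 : X2 → X2 → ℝ)
    (hK1m : Measurable (Function.uncurry K1)) (hK2m : Measurable (Function.uncurry K2))
    (hK1s : ∀ a b, K1 a b = K1 b a) (hK2s : ∀ a b, K2 a b = K2 b a)
    (C1 C2 : ℝ) (hC1 : ∀ a b, |K1 a b| ≤ C1) (hC2 : ∀ a b, |K2 a b| ≤ C2)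
    (n : ℕ) (A : (Fin n → X1 × X2) → ℝ)
    (hA : ∀ x, A x = (1 / (n : ℝ) ^ 2) * ∑ i : Fin n, ∑ j : Fin n,
        K1 (x i).1 (x j).1 * K2 (x i).2 (x j).2) :
    (∀ ε : ℝ, 0 < ε →
      (Measure.pi fun _ : Fin n => μ)
          {x | ε ≤ |A x - ∫ x', A x' ∂(Measure.pi fun _ : Fin n => μ)|}
        ≤ ENNReal.ofReal (2 * Real.exp (-((n : ℝ) * ε ^ 2) / (32 * C1 ^ 2 * C2 ^ 2)))) ∧
    (∀ δ : ℝ, 0 < δ → δ < 1 →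
      (Measure.pi fun _ : Fin n => μ)
          {x | C1 * C2 * Real.sqrt ((32 / (n : ℝ)) * Real.log (2 / δ))
              < |A x - ∫ x', A x' ∂(Measure.pi fun _ : Fin n => μ)|}
        ≤ ENNReal.ofReal δ) :=
  empirical_kernel_alignment_concentration_general μ K1 K2 hK1m hK2m C1 C2 hC1 hC2 n A hA
end

section
/- Let μ be a probability measure on X1 × X2 and let f1 : X1 → ℝ^{d1}, f2 : X2 → ℝ^{d2} be measurable with E_μ‖f1(x1)‖² < ∞ and E_μ‖f2(x2)‖² < ∞. Define kernels K_q(x, x') = ⟨f_q(x_q), f_q(x_q')⟩ on the joint space, and covariance matrices Σ_{p,q} = E_μ[f_p(x_p) f_q(x_q)^T]. Then ∫∫ K1(x, x') K2(x, x') dμ(x) dμ(x') = ‖Σ_{1,2}‖_F²; consequently, if Σ_{1,1} ≠ 0 and Σ_{2,2} ≠ 0, the population kernel alignment satisfies A(K1, K2) := ∫∫ K1 K2 dμ⊗dμ / √( ∫∫ K1² dμ⊗dμ · ∫∫ K2² dμ⊗dμ ) = ‖Σ_{1,2}‖_F² / (‖Σ_{1,1}‖_F · ‖Σ_{2,2}‖_F).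 -/
/-!
The product of the two linear kernels is again a sum of rank-one terms,
`⟨f₁(x), f₁(x')⟩ ⟨f₂(x), f₂(x')⟩ = ∑_{a,b} u_{ab}(x) u_{ab}(x')` with `u_{ab} = f₁ₐ f₂_b`,
so its double integral factorises as `∑_{a,b} (∫ u_{ab})² = ‖Σ₁₂‖_F²`. Square-integrability of
the features makes every `u_{ab}` integrable (Hölder), which justifies exchanging the finite sums
with the integrals. The same identity for the pairs `(f₁, f₁)` and `(f₂, f₂)` gives the
normalising integrals `‖Σ₁₁‖_F²` and `‖Σ₂₂‖_F²`.
-/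

open MeasureTheory
open scoped BigOperators

/-- Frobenius inner product of two real matrices. -/
def frobInner {m n : Type*} [Fintype m] [Fintype n] (A B : Matrix m n ℝ) : ℝ :=
  ∑ i, ∑ j, A i j * B i j

/-- Frobenius norm of a real matrix. -/
noncomputable def frobNorm {m n : Type*} [Fintype m] [Fintype n] (A : Matrix m n ℝ) : ℝ :=
  Real.sqrt (frobInner A A)

open Finset

lemma dotProduct_mul_dotProduct_eq_sum_prod {Y ι κ : Type*} [Fintype ι] [Fintype κ]
    (g : Y → ι → ℝ) (h : Y → κ → ℝ) (y y' : Y) :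
    (∑ a, g y a * g y' a) * (∑ b, h y b * h y' b)
      = ∑ p : ι × κ, (g y p.1 * h y p.2) * (g y' p.1 * h y' p.2) := by
  rw [sum_mul_sum, ← sum_product']
  exact sum_congr rfl fun p _ => by ring

section

variable {X : Type*} [MeasurableSpace X] {μ : Measure X}

lemma memLp_two_apply_of_integrable_sum_sq {ι : Type*} [Fintype ι] {g : X → ι → ℝ}
    (hg : Measurable g) (hgL2 : Integrable (fun x => ∑ a, g x a ^ 2) μ) (a : ι) :
    MemLp (fun x => g x a) 2 μ := by
  have hmeas := (hg.eval (a := a)).aestronglyMeasurable (μ := μ)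
  refine (memLp_two_iff_integrable_sq hmeas).2 <| hgL2.mono' (hmeas.pow 2) ?_
  filter_upwards with x
  rw [Real.norm_of_nonneg (sq_nonneg _)]
  exact single_le_sum (fun i _ => sq_nonneg (g x i)) (mem_univ a)

lemma integral_integral_sum_mul_eq_sum_sq {ι : Type*} [Fintype ι] (u : X → ι → ℝ)
    (hu : ∀ i, Integrable (fun x => u x i) μ) :
    ∫ x, ∫ x', ∑ i, u x i * u x' i ∂μ ∂μ = ∑ i, (∫ x, u x i ∂μ) ^ 2 := by
  have inner_eq : ∀ x, ∫ x', ∑ i, u x i * u x' i ∂μ = ∑ i, u x i * ∫ x', u x' i ∂μ := by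
    intro x
    rw [integral_finsetSum _ fun i _ => (hu i).const_mul _]
    simp only [integral_const_mul]
  simp only [inner_eq]
  rw [integral_finsetSum _ fun i _ => (hu i).mul_const _]
  simp only [integral_mul_const, sq]

lemma integral_integral_dotProduct_mul_dotProduct_eq_frobInner
    {ι κ : Type*} [Fintype ι] [Fintype κ] {g : X → ι → ℝ} {h : X → κ → ℝ} (hg : Measurable g) (hh : Measurable h)
    (hgL2 : Integrable (fun x => ∑ a, g x a ^ 2) μ)
    (hhL2 : Integrable (fun x => ∑ b, h x b ^ 2) μ)
    (C : Matrix ι κ ℝ) (hC : ∀ a b, C a b = ∫ x, g x a * h x b ∂μ) :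
    ∫ x, ∫ x', (∑ a, g x a * g x' a) * (∑ b, h x b * h x' b) ∂μ ∂μ = frobInner C C := by
  have hgh : ∀ p : ι × κ, Integrable (fun x => g x p.1 * h x p.2) μ := fun p =>
    (memLp_two_apply_of_integrable_sum_sq hg hgL2 p.1).integrable_mul
      (memLp_two_apply_of_integrable_sum_sq hh hhL2 p.2)
  simp only [dotProduct_mul_dotProduct_eq_sum_prod g h]
  refine (integral_integral_sum_mul_eq_sum_sq
    (fun x (p : ι × κ) => g x p.1 * h x p.2) hgh).trans ?_
  simp only [Fintype.sum_prod_type, frobInner, hC, sq]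

end

theorem population_kernel_alignment_representation_general
    {X1 X2 : Type*} [MeasurableSpace X1] [MeasurableSpace X2] {d1 d2 : ℕ}
    (μ : Measure (X1 × X2))
    (f1 : X1 → Fin d1 → ℝ) (f2 : X2 → Fin d2 → ℝ)
    (hf1 : Measurable f1) (hf2 : Measurable f2)
    (hf1L2 : Integrable (fun x => ∑ a, (f1 x.1 a) ^ 2) μ)
    (hf2L2 : Integrable (fun x => ∑ b, (f2 x.2 b) ^ 2) μ)
    (S11 : Matrix (Fin d1) (Fin d1) ℝ) (S12 : Matrix (Fin d1) (Fin d2) ℝ)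
    (S22 : Matrix (Fin d2) (Fin d2) ℝ)
    (hS11 : ∀ a b, S11 a b = ∫ x, f1 x.1 a * f1 x.1 b ∂μ)
    (hS12 : ∀ a b, S12 a b = ∫ x, f1 x.1 a * f2 x.2 b ∂μ)
    (hS22 : ∀ a b, S22 a b = ∫ x, f2 x.2 a * f2 x.2 b ∂μ) :
    (∫ x, ∫ x', (∑ a, f1 x.1 a * f1 x'.1 a) * (∑ b, f2 x.2 b * f2 x'.2 b) ∂μ ∂μ)
      = frobInner S12 S12 ∧
    (S11 ≠ 0 → S22 ≠ 0 →
      (∫ x, ∫ x', (∑ a, f1 x.1 a * f1 x'.1 a) * (∑ b, f2 x.2 b * f2 x'.2 b) ∂μ ∂μ) /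
        Real.sqrt
          ((∫ x, ∫ x', (∑ a, f1 x.1 a * f1 x'.1 a) ^ 2 ∂μ ∂μ) *
            (∫ x, ∫ x', (∑ b, f2 x.2 b * f2 x'.2 b) ^ 2 ∂μ ∂μ))
        = frobInner S12 S12 / (frobNorm S11 * frobNorm S22)) := by
  have hm1 : Measurable fun x : X1 × X2 => f1 x.1 := hf1.comp measurable_fst
  have hm2 : Measurable fun x : X1 × X2 => f2 x.2 := hf2.comp measurable_snd
  have h12 := integral_integral_dotProduct_mul_dotProduct_eq_frobInner hm1 hm2 hf1L2 hf2L2 _ hS12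
  have h11 := integral_integral_dotProduct_mul_dotProduct_eq_frobInner hm1 hm1 hf1L2 hf1L2 _ hS11
  have h22 := integral_integral_dotProduct_mul_dotProduct_eq_frobInner hm2 hm2 hf2L2 hf2L2 _ hS22
  refine ⟨h12, fun _ _ => ?_⟩
  have h11_nonneg : 0 ≤ frobInner S11 S11 :=
    sum_nonneg fun a _ => sum_nonneg fun b _ => mul_self_nonneg _
  simp only [sq, h12, h11, h22, Real.sqrt_mul h11_nonneg, frobNorm]

/-- Population kernel alignment of linear-feature kernels
`K_q(x,x') = ⟨f_q(x_q), f_q(x_q')⟩`: the double integral `∫∫ K1 K2 dμ⊗dμ` equals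
`‖Σ₁₂‖_F²`, and consequently `A(K1,K2) = ‖Σ₁₂‖_F² / (‖Σ₁₁‖_F ‖Σ₂₂‖_F)` when
`Σ₁₁ ≠ 0` and `Σ₂₂ ≠ 0`. -/
theorem population_kernel_alignment_representation
    {X1 X2 : Type*} [MeasurableSpace X1] [MeasurableSpace X2] {d1 d2 : ℕ}
    (μ : Measure (X1 × X2)) [IsProbabilityMeasure μ]
    (f1 : X1 → Fin d1 → ℝ) (f2 : X2 → Fin d2 → ℝ)
    (hf1 : Measurable f1) (hf2 : Measurable f2)
    (hf1L2 : Integrable (fun x => ∑ a, (f1 x.1 a) ^ 2) μ)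
    (hf2L2 : Integrable (fun x => ∑ b, (f2 x.2 b) ^ 2) μ)
    (S11 : Matrix (Fin d1) (Fin d1) ℝ) (S12 : Matrix (Fin d1) (Fin d2) ℝ)
    (S22 : Matrix (Fin d2) (Fin d2) ℝ)
    (hS11 : ∀ a b, S11 a b = ∫ x, f1 x.1 a * f1 x.1 b ∂μ)
    (hS12 : ∀ a b, S12 a b = ∫ x, f1 x.1 a * f2 x.2 b ∂μ)
    (hS22 : ∀ a b, S22 a b = ∫ x, f2 x.2 a * f2 x.2 b ∂μ) :
    (∫ x, ∫ x', (∑ a, f1 x.1 a * f1 x'.1 a) * (∑ b, f2 x.2 b * f2 x'.2 b) ∂μ ∂μ)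
      = frobInner S12 S12 ∧
    (S11 ≠ 0 → S22 ≠ 0 →
      (∫ x, ∫ x', (∑ a, f1 x.1 a * f1 x'.1 a) * (∑ b, f2 x.2 b * f2 x'.2 b) ∂μ ∂μ) /
        Real.sqrt
          ((∫ x, ∫ x', (∑ a, f1 x.1 a * f1 x'.1 a) ^ 2 ∂μ ∂μ) *
            (∫ x, ∫ x', (∑ b, f2 x.2 b * f2 x'.2 b) ^ 2 ∂μ ∂μ))
        = frobInner S12 S12 / (frobNorm S11 * frobNorm S22)) :=
  population_kernel_alignment_representation_general μ f1 f2 hf1 hf2 hf1L2 hf2L2 S11 S12 S22 hS11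
    hS12 hS22
end

section
/- Let μ be a probability measure on X1 × X2 with marginals μ1, μ2 under the coordinate projections. For q = 1,2 let φ_{q,1},…,φ_{q,m_q} ∈ L²(μ_q) be orthonormal and let η_{q,1},…,η_{q,m_q} ≥ 0 be not all zero. Define kernels K_q(x, x') = Σ_i η_{q,i} φ_{q,i}(x_q) φ_{q,i}(x_q') on the joint space and let c_{ij} = E_μ[ φ_{1,i}(x1) φ_{2,j}(x2) ]. Then the population kernel alignment satisfies A(K1, K2) = ( Σ_{i,j} η_{1,i} η_{2,j} c_{ij}² ) / √( Σ_i η_{1,i}² · Σ_j η_{2,j}² ); equivalently, A(K1, K2) = ⟨ η̂1, (C ⊙ C) η̂2 ⟩ where C = (c_{ij}), ⊙ is the Hadamard (entrywise) product, and η̂_q = η_q / ‖η_q‖ is the ℓ²-normalized eigenvalue vector. -/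
open MeasureTheory
open scoped BigOperators

/-!
Expanding both kernels, the integrand of each double integral is a finite combination of
products `u(x) u(x')` with `u = φ_{1,i} φ_{2,j}` (resp. `φ_{q,i} φ_{q,j}`), so Fubini is never
needed: the double integral of such a product is `(∫ u)²`. This turns `∫∫ K₁K₂` into
`∑ η_{1,i} η_{2,j} c_{ij}²` and, by orthonormality, `∫∫ K_q²` into `∑ η_{q,i}²`; the normalized
form is then algebra.
-/

section DoubleIntegral

variable {Y : Type*} [MeasurableSpace Y] {μ : Measure Y} {ι κ : Type*} [Fintype ι] [Fintype κ]

lemma integral_sum_sum_const_mul (w : ι → κ → ℝ) {h : ι → κ → Y → ℝ}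
    (hh : ∀ i j, Integrable (h i j) μ) :
    ∫ y, ∑ i, ∑ j, w i j * h i j y ∂μ = ∑ i, ∑ j, w i j * ∫ y, h i j y ∂μ := by
  rw [integral_finsetSum _ fun i _ =>
    integrable_finsetSum _ fun j _ => (hh i j).const_mul _]
  refine Finset.sum_congr rfl fun i _ => ?_
  rw [integral_finsetSum _ fun j _ => (hh i j).const_mul _]
  simp only [integral_const_mul]

lemma integral_integral_sum_mul_sum (f : ι → Y → ℝ) (g : κ → Y → ℝ) (a : ι → ℝ) (b : κ → ℝ)
    (hfg : ∀ i j, Integrable (fun y => f i y * g j y) μ) :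
    ∫ x, ∫ x', (∑ i, a i * f i x * f i x') * (∑ j, b j * g j x * g j x') ∂μ ∂μ
      = ∑ i, ∑ j, a i * b j * (∫ y, f i y * g j y ∂μ) ^ 2 := by
  have inner : ∀ x, ∫ x', (∑ i, a i * f i x * f i x') * (∑ j, b j * g j x * g j x') ∂μ
      = ∑ i, ∑ j, (a i * b j * ∫ y, f i y * g j y ∂μ) * (f i x * g j x) := by
    intro x
    have expand : ∀ x', (∑ i, a i * f i x * f i x') * (∑ j, b j * g j x * g j x')
        = ∑ i, ∑ j, (a i * b j * (f i x * g j x)) * (f i x' * g j x') := by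
      intro x'
      rw [Finset.sum_mul_sum]
      exact Finset.sum_congr rfl fun i _ => Finset.sum_congr rfl fun j _ => by ring
    simp only [expand, integral_sum_sum_const_mul _ hfg]
    exact Finset.sum_congr rfl fun i _ => Finset.sum_congr rfl fun j _ => by ring
  simp only [inner, integral_sum_sum_const_mul _ hfg]
  exact Finset.sum_congr rfl fun i _ => Finset.sum_congr rfl fun j _ => by ring

lemma integral_integral_sq_of_orthonormal [DecidableEq ι] (f : ι → Y → ℝ) (a : ι → ℝ)
    (horth : ∀ i j, ∫ y, f i y * f j y ∂μ = if i = j then 1 else 0)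
    (hint : ∀ i j, Integrable (fun y => f i y * f j y) μ) :
    ∫ x, ∫ x', (∑ i, a i * f i x * f i x') ^ 2 ∂μ ∂μ = ∑ i, a i ^ 2 := by
  simp only [sq, integral_integral_sum_mul_sum f f a a hint, horth]
  simp [Finset.sum_ite_eq]

end DoubleIntegral

lemma div_sqrt_mul_eq_sum_sum {ι κ : Type*} [Fintype ι] [Fintype κ]
    (a : ι → ℝ) (b : κ → ℝ) (w : ι → κ → ℝ) {A B : ℝ} (hA : 0 ≤ A) :
    (∑ i, ∑ j, a i * b j * w i j) / Real.sqrt (A * B)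
      = ∑ i, ∑ j, (a i / Real.sqrt A) * w i j * (b j / Real.sqrt B) := by
  simp only [Real.sqrt_mul hA, Finset.sum_div]
  exact Finset.sum_congr rfl fun i _ => Finset.sum_congr rfl fun j _ => by ring

theorem population_kernel_alignment_spectral_general
    {X1 X2 : Type*} [MeasurableSpace X1] [MeasurableSpace X2] {m1 m2 : ℕ}
    (μ : Measure (X1 × X2))
    (φ1 : Fin m1 → X1 → ℝ) (φ2 : Fin m2 → X2 → ℝ)
    (horth1 : ∀ i j, (∫ x, φ1 i x.1 * φ1 j x.1 ∂μ) = if i = j then 1 else 0)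
    (horth2 : ∀ i j, (∫ x, φ2 i x.2 * φ2 j x.2 ∂μ) = if i = j then 1 else 0)
    (hint1 : ∀ i j, Integrable (fun x => φ1 i x.1 * φ1 j x.1) μ)
    (hint2 : ∀ i j, Integrable (fun x => φ2 i x.2 * φ2 j x.2) μ)
    (hint12 : ∀ i j, Integrable (fun x => φ1 i x.1 * φ2 j x.2) μ)
    (η1 : Fin m1 → ℝ) (η2 : Fin m2 → ℝ)
    (K1 K2 : X1 × X2 → X1 × X2 → ℝ)
    (hK1 : ∀ x x', K1 x x' = ∑ i, η1 i * φ1 i x.1 * φ1 i x'.1)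
    (hK2 : ∀ x x', K2 x x' = ∑ i, η2 i * φ2 i x.2 * φ2 i x'.2)
    (c : Fin m1 → Fin m2 → ℝ) (hc : ∀ i j, c i j = ∫ x, φ1 i x.1 * φ2 j x.2 ∂μ) :
    (∫ x, ∫ x', K1 x x' * K2 x x' ∂μ ∂μ) /
        Real.sqrt ((∫ x, ∫ x', (K1 x x') ^ 2 ∂μ ∂μ) * (∫ x, ∫ x', (K2 x x') ^ 2 ∂μ ∂μ))
      = (∑ i, ∑ j, η1 i * η2 j * c i j ^ 2) /
          Real.sqrt ((∑ i, η1 i ^ 2) * (∑ j, η2 j ^ 2)) ∧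
    (∫ x, ∫ x', K1 x x' * K2 x x' ∂μ ∂μ) /
        Real.sqrt ((∫ x, ∫ x', (K1 x x') ^ 2 ∂μ ∂μ) * (∫ x, ∫ x', (K2 x x') ^ 2 ∂μ ∂μ))
      = ∑ i, ∑ j, (η1 i / Real.sqrt (∑ k, η1 k ^ 2)) * (c i j ^ 2)
          * (η2 j / Real.sqrt (∑ k, η2 k ^ 2)) := by
  have cross : ∫ x, ∫ x', K1 x x' * K2 x x' ∂μ ∂μ = ∑ i, ∑ j, η1 i * η2 j * c i j ^ 2 := by
    simp only [hK1, hK2, hc]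
    exact integral_integral_sum_mul_sum (fun i (x : X1 × X2) => φ1 i x.1)
      (fun j (x : X1 × X2) => φ2 j x.2) η1 η2 hint12
  have norm1 : ∫ x, ∫ x', (K1 x x') ^ 2 ∂μ ∂μ = ∑ i, η1 i ^ 2 := by
    simp only [hK1]
    exact integral_integral_sq_of_orthonormal (fun i (x : X1 × X2) => φ1 i x.1) η1 horth1 hint1
  have norm2 : ∫ x, ∫ x', (K2 x x') ^ 2 ∂μ ∂μ = ∑ i, η2 i ^ 2 := by
    simp only [hK2]
    exact integral_integral_sq_of_orthonormal (fun i (x : X1 × X2) => φ2 i x.2) η2 horth2 hint2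
  rw [cross, norm1, norm2]
  exact ⟨rfl, div_sqrt_mul_eq_sum_sum η1 η2 _ (Finset.sum_nonneg fun i _ => sq_nonneg _)⟩

/-- Spectral interpretation of the population kernel alignment of two
kernels `K_q = ∑ η_{q,i} φ_{q,i} ⊗ φ_{q,i}` acting through the coordinate projections:
`A(K1,K2) = (∑_{i,j} η_{1,i} η_{2,j} c_{ij}²) / √(∑ η_{1,i}² ∑ η_{2,j}²)`, and
equivalently `A(K1,K2) = ⟨η̂₁, (C ⊙ C) η̂₂⟩` with `c_{ij} = E_μ[φ_{1,i}(x1) φ_{2,j}(x2)]`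
and `η̂_q = η_q / ‖η_q‖`. -/
theorem population_kernel_alignment_spectral
    {X1 X2 : Type*} [MeasurableSpace X1] [MeasurableSpace X2] {m1 m2 : ℕ}
    (μ : Measure (X1 × X2)) [IsProbabilityMeasure μ]
    (φ1 : Fin m1 → X1 → ℝ) (φ2 : Fin m2 → X2 → ℝ)
    (hφ1m : ∀ i, Measurable (φ1 i)) (hφ2m : ∀ i, Measurable (φ2 i))
    (horth1 : ∀ i j, (∫ x, φ1 i x.1 * φ1 j x.1 ∂μ) = if i = j then 1 else 0)
    (horth2 : ∀ i j, (∫ x, φ2 i x.2 * φ2 j x.2 ∂μ) = if i = j then 1 else 0)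
    (hint1 : ∀ i j, Integrable (fun x => φ1 i x.1 * φ1 j x.1) μ)
    (hint2 : ∀ i j, Integrable (fun x => φ2 i x.2 * φ2 j x.2) μ)
    (hint12 : ∀ i j, Integrable (fun x => φ1 i x.1 * φ2 j x.2) μ)
    (η1 : Fin m1 → ℝ) (η2 : Fin m2 → ℝ)
    (hη1 : ∀ i, 0 ≤ η1 i) (hη2 : ∀ i, 0 ≤ η2 i)
    (hη10 : η1 ≠ 0) (hη20 : η2 ≠ 0)
    (K1 K2 : X1 × X2 → X1 × X2 → ℝ)
    (hK1 : ∀ x x', K1 x x' = ∑ i, η1 i * φ1 i x.1 * φ1 i x'.1)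
    (hK2 : ∀ x x', K2 x x' = ∑ i, η2 i * φ2 i x.2 * φ2 i x'.2)
    (c : Fin m1 → Fin m2 → ℝ) (hc : ∀ i j, c i j = ∫ x, φ1 i x.1 * φ2 j x.2 ∂μ) :
    (∫ x, ∫ x', K1 x x' * K2 x x' ∂μ ∂μ) /
        Real.sqrt ((∫ x, ∫ x', (K1 x x') ^ 2 ∂μ ∂μ) * (∫ x, ∫ x', (K2 x x') ^ 2 ∂μ ∂μ))
      = (∑ i, ∑ j, η1 i * η2 j * c i j ^ 2) /
          Real.sqrt ((∑ i, η1 i ^ 2) * (∑ j, η2 j ^ 2)) ∧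
    (∫ x, ∫ x', K1 x x' * K2 x x' ∂μ ∂μ) /
        Real.sqrt ((∫ x, ∫ x', (K1 x x') ^ 2 ∂μ ∂μ) * (∫ x, ∫ x', (K2 x x') ^ 2 ∂μ ∂μ))
      = ∑ i, ∑ j, (η1 i / Real.sqrt (∑ k, η1 k ^ 2)) * (c i j ^ 2)
          * (η2 j / Real.sqrt (∑ k, η2 k ^ 2)) :=
  population_kernel_alignment_spectral_general μ φ1 φ2 horth1 horth2 hint1 hint2 hint12 η1 η2 K1 K2
    hK1 hK2 c hc
end

section
/- Let (Ω, P) be a probability space with a random variable x in a measurable space X and y ∈ ℝ^t with E‖y‖² < ∞, and let f1 : X → ℝ^{d1}, f2 : X → ℝ^{d2} be measurable with E‖f1(x)‖² < ∞ and E‖f2(x)‖² < ∞. Let g2 : ℝ^{d2} → ℝ^t be κ2-Lipschitz, and suppose R := E‖g2(f2(x)) − y‖² < ∞. For any measurable s : ℝ^{d1} → ℝ^{d2} with e := E‖s(f1(x)) − f2(x)‖² < ∞, the stitched risk satisfies E‖g2(s(f1(x))) − y‖² ≤ R + κ2²·e + 2·κ2·√(e·R). -/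
/-!
Pointwise, going through `g2 (f2 (x ω))` and using the Lipschitz bound gives
`‖g2 (s (f1 (x ω))) - y ω‖ ≤ B ω + κ2 * D ω` with `B ω = ‖g2 (f2 (x ω)) - y ω‖` and
`D ω = ‖s (f1 (x ω)) - f2 (x ω)‖`. Squaring and integrating bounds the stitched risk by
`R + κ2² e + 2 κ2 E[B D]`, and Cauchy–Schwarz gives `E[B D] ≤ √(e R)`.
-/

open MeasureTheory

section

variable {Ω : Type*} [MeasurableSpace Ω] {μ : Measure Ω}

theorem memLp_two_of_integrable_sq_of_nonneg {f : Ω → ℝ} (hf : 0 ≤ f)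
    (hf2 : Integrable (fun ω => f ω ^ 2) μ) : MemLp f 2 μ := by
  have hsqrt : (fun ω => Real.sqrt (f ω ^ 2)) = f := funext fun ω => Real.sqrt_sq (hf ω)
  have hmeas : AEStronglyMeasurable f μ :=
    hsqrt ▸ Real.continuous_sqrt.comp_aestronglyMeasurable hf2.aestronglyMeasurable
  exact (memLp_two_iff_integrable_sq hmeas).2 hf2

theorem integral_mul_le_L2_mul_L2_of_nonneg {f g : Ω → ℝ} (hf : 0 ≤ f)
    (hg : 0 ≤ g) (hf2 : Integrable (fun ω => f ω ^ 2) μ) (hg2 : Integrable (fun ω => g ω ^ 2) μ) :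
    ∫ ω, f ω * g ω ∂μ ≤ Real.sqrt (∫ ω, f ω ^ 2 ∂μ) * Real.sqrt (∫ ω, g ω ^ 2 ∂μ) := by
  have hholder := integral_mul_le_Lp_mul_Lq_of_nonneg (μ := μ) Real.HolderConjugate.two_two
    (.of_forall hf) (.of_forall hg) (by simpa using memLp_two_of_integrable_sq_of_nonneg hf hf2)
    (by simpa using memLp_two_of_integrable_sq_of_nonneg hg hg2)
  simpa only [Real.rpow_two, Real.sqrt_eq_rpow] using hholder

theorem integral_sq_norm_le_of_norm_le_add {E : Type*} [SeminormedAddCommGroup E] {F : Ω → E}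
    {u v : Ω → ℝ} {κ : ℝ} (hκ : 0 ≤ κ) (hu : 0 ≤ u) (hv : 0 ≤ v)
    (hu2 : Integrable (fun ω => u ω ^ 2) μ) (hv2 : Integrable (fun ω => v ω ^ 2) μ)
    (hF : ∀ ω, ‖F ω‖ ≤ u ω + κ * v ω) :
    ∫ ω, ‖F ω‖ ^ 2 ∂μ ≤ ∫ ω, u ω ^ 2 ∂μ + κ ^ 2 * ∫ ω, v ω ^ 2 ∂μ
      + 2 * κ * Real.sqrt ((∫ ω, v ω ^ 2 ∂μ) * ∫ ω, u ω ^ 2 ∂μ) := by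
  have huv : Integrable (fun ω => u ω * v ω) μ :=
    (memLp_two_of_integrable_sq_of_nonneg hu hu2).integrable_mul
      (memLp_two_of_integrable_sq_of_nonneg hv hv2)
  have hsq : ∀ ω, ‖F ω‖ ^ 2 ≤ u ω ^ 2 + κ ^ 2 * v ω ^ 2 + 2 * κ * (u ω * v ω) := fun ω => by
    have := pow_le_pow_left₀ (norm_nonneg _) (hF ω) 2
    linarith
  have hquad : Integrable (fun ω => u ω ^ 2 + κ ^ 2 * v ω ^ 2) μ := hu2.add (hv2.const_mul _)
  have hcross : Integrable (fun ω => 2 * κ * (u ω * v ω)) μ := huv.const_mul _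
  -- A non-integrable left-hand side has integral `0`, so only the upper bound must be integrable.
  calc ∫ ω, ‖F ω‖ ^ 2 ∂μ
      ≤ ∫ ω, u ω ^ 2 + κ ^ 2 * v ω ^ 2 + 2 * κ * (u ω * v ω) ∂μ :=
        integral_mono_of_nonneg (.of_forall fun ω => sq_nonneg _) (hquad.add hcross)
          (.of_forall hsq)
    _ = ∫ ω, u ω ^ 2 ∂μ + κ ^ 2 * ∫ ω, v ω ^ 2 ∂μ + 2 * κ * ∫ ω, u ω * v ω ∂μ := by
        rw [integral_add hquad hcross, integral_add hu2 (hv2.const_mul _), integral_const_mul,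
          integral_const_mul]
    _ ≤ _ := by
        rw [Real.sqrt_mul' _ (integral_nonneg fun ω => sq_nonneg (u ω)), mul_comm (Real.sqrt _)]
        gcongr
        exact integral_mul_le_L2_mul_L2_of_nonneg hu hv hu2 hv2

end

theorem norm_apply_sub_le_norm_apply_sub_add {E F : Type*} [SeminormedAddCommGroup E]
    [SeminormedAddCommGroup F] {g : E → F} {κ : ℝ} (hg : ∀ z z', ‖g z - g z'‖ ≤ κ * ‖z - z'‖)
    (z z' : E) (w : F) : ‖g z - w‖ ≤ ‖g z' - w‖ + κ * ‖z - z'‖ :=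
  calc ‖g z - w‖ = ‖(g z - g z') + (g z' - w)‖ := by rw [sub_add_sub_cancel]
    _ ≤ ‖g z - g z'‖ + ‖g z' - w‖ := norm_add_le _ _
    _ ≤ ‖g z' - w‖ + κ * ‖z - z'‖ := by linarith [hg z z']

theorem stitched_risk_bound_general
    {Ω X : Type*} [MeasurableSpace Ω]
    (P : Measure Ω)
    {t d1 d2 : ℕ} (x : Ω → X)
    (y : Ω → EuclideanSpace ℝ (Fin t))
    (f1 : X → EuclideanSpace ℝ (Fin d1)) (f2 : X → EuclideanSpace ℝ (Fin d2))
    (g2 : EuclideanSpace ℝ (Fin d2) → EuclideanSpace ℝ (Fin t))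
    (κ2 : ℝ) (hκ2 : 0 ≤ κ2)
    (hg2 : ∀ z z', ‖g2 z - g2 z'‖ ≤ κ2 * ‖z - z'‖)
    (R : ℝ) (hR : R = ∫ ω, ‖g2 (f2 (x ω)) - y ω‖ ^ 2 ∂P)
    (hRint : Integrable (fun ω => ‖g2 (f2 (x ω)) - y ω‖ ^ 2) P)
    (s : EuclideanSpace ℝ (Fin d1) → EuclideanSpace ℝ (Fin d2))
    (e : ℝ) (he : e = ∫ ω, ‖s (f1 (x ω)) - f2 (x ω)‖ ^ 2 ∂P)
    (heint : Integrable (fun ω => ‖s (f1 (x ω)) - f2 (x ω)‖ ^ 2) P) :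
    (∫ ω, ‖g2 (s (f1 (x ω))) - y ω‖ ^ 2 ∂P)
      ≤ R + κ2 ^ 2 * e + 2 * κ2 * Real.sqrt (e * R) := by
  rw [hR, he]
  exact integral_sq_norm_le_of_norm_le_add hκ2 (fun _ => norm_nonneg _) (fun _ => norm_nonneg _)
    hRint heint fun ω => norm_apply_sub_le_norm_apply_sub_add hg2 _ _ _

/-- Stitching error bound for a `κ2`-Lipschitz output head `g2`:
for any measurable stitcher `s`, with `R = E‖g2(f2(x)) − y‖²` and
`e = E‖s(f1(x)) − f2(x)‖²`, the stitched risk satisfies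
`E‖g2(s(f1(x))) − y‖² ≤ R + κ2² e + 2 κ2 √(e R)`. -/
theorem stitched_risk_bound
    {Ω X : Type*} [MeasurableSpace Ω] [MeasurableSpace X]
    (P : Measure Ω) [IsProbabilityMeasure P]
    {t d1 d2 : ℕ} (x : Ω → X) (hx : Measurable x)
    (y : Ω → EuclideanSpace ℝ (Fin t)) (hy : Measurable y)
    (hy2 : Integrable (fun ω => ‖y ω‖ ^ 2) P)
    (f1 : X → EuclideanSpace ℝ (Fin d1)) (f2 : X → EuclideanSpace ℝ (Fin d2))
    (hf1 : Measurable f1) (hf2 : Measurable f2)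
    (hf12 : Integrable (fun ω => ‖f1 (x ω)‖ ^ 2) P)
    (hf22 : Integrable (fun ω => ‖f2 (x ω)‖ ^ 2) P)
    (g2 : EuclideanSpace ℝ (Fin d2) → EuclideanSpace ℝ (Fin t))
    (κ2 : ℝ) (hκ2 : 0 ≤ κ2)
    (hg2 : ∀ z z', ‖g2 z - g2 z'‖ ≤ κ2 * ‖z - z'‖)
    (R : ℝ) (hR : R = ∫ ω, ‖g2 (f2 (x ω)) - y ω‖ ^ 2 ∂P)
    (hRint : Integrable (fun ω => ‖g2 (f2 (x ω)) - y ω‖ ^ 2) P)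
    (s : EuclideanSpace ℝ (Fin d1) → EuclideanSpace ℝ (Fin d2)) (hs : Measurable s)
    (e : ℝ) (he : e = ∫ ω, ‖s (f1 (x ω)) - f2 (x ω)‖ ^ 2 ∂P)
    (heint : Integrable (fun ω => ‖s (f1 (x ω)) - f2 (x ω)‖ ^ 2) P) :
    (∫ ω, ‖g2 (s (f1 (x ω))) - y ω‖ ^ 2 ∂P)
      ≤ R + κ2 ^ 2 * e + 2 * κ2 * Real.sqrt (e * R) :=
  stitched_risk_bound_general P x y f1 f2 g2 κ2 hκ2 hg2 R hR hRint s e he heint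
end

section
/- Let (Ω, P) be a probability space with a random variable x in a measurable space X and y ∈ ℝ^t with E‖y‖² < ∞, and let f1 : X → ℝ^{d1}, f2 : X → ℝ^{d2} be measurable with E‖f1(x)‖² < ∞ and E‖f2(x)‖² < ∞. Let g2 : ℝ^{d2} → ℝ^t be κ2-Lipschitz with R := E‖g2(f2(x)) − y‖² < ∞, and define the misalignment Ã2 := inf_{S ∈ ℝ^{d2×d1}} E‖S f1(x) − f2(x)‖². Then the minimal linear stitching risk satisfies R^stitch := inf_{S ∈ ℝ^{d2×d1}} E‖g2(S f1(x)) − y‖² ≤ R + κ2²·Ã2 + 2·κ2·√(Ã2·R). -/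
/-!
The bound is `(√R + κ₂ √Ã₂)²`. For a fixed stitcher `S`, Minkowski's inequality in `L²` applied to
`g₂(S f₁) - y = (g₂(S f₁) - g₂(f₂)) + (g₂(f₂) - y)`, together with the Lipschitz bound on the first
summand, gives `‖g₂(S f₁) - y‖₂ ≤ √R + κ₂ ‖S f₁ - f₂‖₂`. Squaring, and passing to the infimum over `S`
through the monotone continuous map `s ↦ (√R + κ₂ √s)²`, yields the claim.
-/

open MeasureTheory
open scoped ENNReal

section

variable {α E F : Type*} [MeasurableSpace α] {μ : Measure α}
  [NormedAddCommGroup E] [NormedAddCommGroup F]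

theorem integral_norm_sq_eq_lpNorm_sq {f : α → E} (hf : AEStronglyMeasurable f μ) :
    ∫ x, ‖f x‖ ^ 2 ∂μ = lpNorm f 2 μ ^ 2 := by
  rw [lpNorm_eq_integral_norm_rpow_toReal two_ne_zero ENNReal.ofNat_ne_top hf,
    ← Real.rpow_natCast, ← Real.rpow_mul (integral_nonneg fun _ => by positivity)]
  norm_num

theorem lpNorm_comp_sub_le_of_lipschitz {p : ℝ≥0∞} (hp : 1 ≤ p) {g : E → F} {κ : ℝ}
    (hκ : 0 ≤ κ) (hg : ∀ z z', ‖g z - g z'‖ ≤ κ * ‖z - z'‖) {u v : α → E} {y : α → F}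
    (hvy : MemLp (fun ω => g (v ω) - y ω) p μ) (huv : MemLp (fun ω => u ω - v ω) p μ) :
    lpNorm (fun ω => g (u ω) - y ω) p μ
      ≤ lpNorm (fun ω => g (v ω) - y ω) p μ + κ * lpNorm (fun ω => u ω - v ω) p μ := by
  have hsplit : (fun ω => g (u ω) - y ω)
      = (fun ω => g (u ω) - g (v ω)) + fun ω => g (v ω) - y ω := by
    funext ω; simp
  have hlip : lpNorm (fun ω => g (u ω) - g (v ω)) p μ
      ≤ κ * lpNorm (fun ω => u ω - v ω) p μ :=
    calc lpNorm (fun ω => g (u ω) - g (v ω)) p μ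
        ≤ lpNorm (κ • fun ω => ‖u ω - v ω‖) p μ :=
          lpNorm_mono_real (huv.norm.const_smul κ) fun ω => hg _ _
      _ = κ * lpNorm (fun ω => u ω - v ω) p μ := by
          rw [lpNorm_const_smul, lpNorm_norm huv.aestronglyMeasurable, Real.nnnorm_of_nonneg hκ]
          rfl
  rw [hsplit]
  linarith [lpNorm_add_le' hvy hp (f := fun ω => g (u ω) - g (v ω))]

theorem integral_norm_sq_comp_sub_le_of_lipschitz {g : E → F} {κ : ℝ} (hκ : 0 ≤ κ)
    (hg : ∀ z z', ‖g z - g z'‖ ≤ κ * ‖z - z'‖) {u v : α → E} {y : α → F}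
    (hguy : AEStronglyMeasurable (fun ω => g (u ω) - y ω) μ)
    (hvy : MemLp (fun ω => g (v ω) - y ω) 2 μ) (huv : MemLp (fun ω => u ω - v ω) 2 μ) :
    ∫ ω, ‖g (u ω) - y ω‖ ^ 2 ∂μ
      ≤ (√(∫ ω, ‖g (v ω) - y ω‖ ^ 2 ∂μ) + κ * √(∫ ω, ‖u ω - v ω‖ ^ 2 ∂μ)) ^ 2 := by
  rw [integral_norm_sq_eq_lpNorm_sq hguy, integral_norm_sq_eq_lpNorm_sq hvy.1,
    integral_norm_sq_eq_lpNorm_sq huv.1, Real.sqrt_sq lpNorm_nonneg, Real.sqrt_sq lpNorm_nonneg]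
  exact pow_le_pow_left₀ lpNorm_nonneg
    (lpNorm_comp_sub_le_of_lipschitz one_le_two hκ hg hvy huv) 2

end

theorem ciInf_le_map_ciInf_of_le_map {ι α β : Type*} [Nonempty ι]
    [ConditionallyCompleteLinearOrder α] [TopologicalSpace α] [OrderTopology α]
    [ConditionallyCompleteLinearOrder β] [TopologicalSpace β] [OrderTopology β]
    {F : ι → β} {G : ι → α} {φ : α → β} (hφ : Monotone φ) (hφc : ContinuousAt φ (⨅ i, G i))
    (hF : BddBelow (Set.range F)) (hG : BddBelow (Set.range G)) (h : ∀ i, F i ≤ φ (G i)) :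
    ⨅ i, F i ≤ φ (⨅ i, G i) :=
  (ciInf_mono hF h).trans_eq (hφ.map_ciInf_of_continuousAt hφc hG).symm

theorem minimal_linear_stitching_risk_bound_general
    {Ω X : Type*} [MeasurableSpace Ω] [MeasurableSpace X]
    (P : Measure Ω)
    {t d1 d2 : ℕ} (x : Ω → X) (hx : Measurable x)
    (y : Ω → EuclideanSpace ℝ (Fin t)) (hy : Measurable y)
    (f1 : X → EuclideanSpace ℝ (Fin d1)) (f2 : X → EuclideanSpace ℝ (Fin d2))
    (hf1 : Measurable f1) (hf2 : Measurable f2)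
    (hf12 : Integrable (fun ω => ‖f1 (x ω)‖ ^ 2) P)
    (hf22 : Integrable (fun ω => ‖f2 (x ω)‖ ^ 2) P)
    (g2 : EuclideanSpace ℝ (Fin d2) → EuclideanSpace ℝ (Fin t))
    (κ2 : ℝ) (hκ2 : 0 ≤ κ2)
    (hg2 : ∀ z z', ‖g2 z - g2 z'‖ ≤ κ2 * ‖z - z'‖)
    (R : ℝ) (hR : R = ∫ ω, ‖g2 (f2 (x ω)) - y ω‖ ^ 2 ∂P)
    (hRint : Integrable (fun ω => ‖g2 (f2 (x ω)) - y ω‖ ^ 2) P)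
    (A2 : ℝ) (hA2 : A2 = ⨅ Sm : Matrix (Fin d2) (Fin d1) ℝ,
        ∫ ω, ‖Matrix.toEuclideanLin Sm (f1 (x ω)) - f2 (x ω)‖ ^ 2 ∂P) :
    (⨅ Sm : Matrix (Fin d2) (Fin d1) ℝ,
        ∫ ω, ‖g2 (Matrix.toEuclideanLin Sm (f1 (x ω))) - y ω‖ ^ 2 ∂P)
      ≤ R + κ2 ^ 2 * A2 + 2 * κ2 * Real.sqrt (A2 * R) := by
  have hg2c : Continuous g2 :=
    (LipschitzWith.of_dist_le' fun z z' => by simpa only [dist_eq_norm] using hg2 z z').continuous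
  have hf1m := (memLp_two_iff_integrable_sq_norm (hf1.comp hx).aestronglyMeasurable).2 hf12
  have hf2m := (memLp_two_iff_integrable_sq_norm (hf2.comp hx).aestronglyMeasurable).2 hf22
  have hhead := (memLp_two_iff_integrable_sq_norm
    ((hg2c.measurable.comp (hf2.comp hx)).sub hy).aestronglyMeasurable).2 hRint
  have hstitch : ∀ Sm : Matrix (Fin d2) (Fin d1) ℝ,
      ∫ ω, ‖g2 (Matrix.toEuclideanLin Sm (f1 (x ω))) - y ω‖ ^ 2 ∂P
        ≤ (√R + κ2 * √(∫ ω, ‖Matrix.toEuclideanLin Sm (f1 (x ω)) - f2 (x ω)‖ ^ 2 ∂P)) ^ 2 := by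
    intro Sm
    have hS : Continuous (Matrix.toEuclideanLin Sm) := LinearMap.continuous_of_finiteDimensional _
    rw [hR]
    exact integral_norm_sq_comp_sub_le_of_lipschitz hκ2 hg2
      (((hg2c.comp hS).measurable.comp (hf1.comp hx)).sub hy).aestronglyMeasurable hhead
      (((Matrix.toEuclideanLin Sm).toContinuousLinearMap.comp_memLp' hf1m).sub hf2m)
  have hmono : Monotone fun s => (√R + κ2 * √s) ^ 2 := fun s s' hs => by dsimp only; gcongr
  have hRnn : 0 ≤ R := hR ▸ integral_nonneg fun _ => by positivity
  have hA2nn : 0 ≤ A2 := hA2 ▸ le_ciInf fun _ => integral_nonneg fun _ => by positivity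
  calc _ ≤ (√R + κ2 * √A2) ^ 2 :=
        hA2 ▸ ciInf_le_map_ciInf_of_le_map hmono (by fun_prop)
          ⟨0, Set.forall_mem_range.2 fun _ => integral_nonneg fun _ => by positivity⟩
          ⟨0, Set.forall_mem_range.2 fun _ => integral_nonneg fun _ => by positivity⟩ hstitch
    _ = R + κ2 ^ 2 * A2 + 2 * κ2 * Real.sqrt (A2 * R) := by
        rw [add_sq, mul_pow, Real.sq_sqrt hRnn, Real.sq_sqrt hA2nn, Real.sqrt_mul hA2nn]
        ring

/-- Minimal linear stitching risk bound via misalignment: with a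
`κ2`-Lipschitz output head `g2`, `R = E‖g2(f2(x)) − y‖²`, and misalignment
`Ã2 = inf_{S} E‖S f1(x) − f2(x)‖²` over linear stitchers `S ∈ ℝ^{d2×d1}`, the minimal
linear stitching risk satisfies
`inf_S E‖g2(S f1(x)) − y‖² ≤ R + κ2² Ã2 + 2 κ2 √(Ã2 R)`. -/
theorem minimal_linear_stitching_risk_bound
    {Ω X : Type*} [MeasurableSpace Ω] [MeasurableSpace X]
    (P : Measure Ω) [IsProbabilityMeasure P]
    {t d1 d2 : ℕ} (x : Ω → X) (hx : Measurable x)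
    (y : Ω → EuclideanSpace ℝ (Fin t)) (hy : Measurable y)
    (hy2 : Integrable (fun ω => ‖y ω‖ ^ 2) P)
    (f1 : X → EuclideanSpace ℝ (Fin d1)) (f2 : X → EuclideanSpace ℝ (Fin d2))
    (hf1 : Measurable f1) (hf2 : Measurable f2)
    (hf12 : Integrable (fun ω => ‖f1 (x ω)‖ ^ 2) P)
    (hf22 : Integrable (fun ω => ‖f2 (x ω)‖ ^ 2) P)
    (g2 : EuclideanSpace ℝ (Fin d2) → EuclideanSpace ℝ (Fin t))
    (κ2 : ℝ) (hκ2 : 0 ≤ κ2)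
    (hg2 : ∀ z z', ‖g2 z - g2 z'‖ ≤ κ2 * ‖z - z'‖)
    (R : ℝ) (hR : R = ∫ ω, ‖g2 (f2 (x ω)) - y ω‖ ^ 2 ∂P)
    (hRint : Integrable (fun ω => ‖g2 (f2 (x ω)) - y ω‖ ^ 2) P)
    (A2 : ℝ) (hA2 : A2 = ⨅ Sm : Matrix (Fin d2) (Fin d1) ℝ,
        ∫ ω, ‖Matrix.toEuclideanLin Sm (f1 (x ω)) - f2 (x ω)‖ ^ 2 ∂P) :
    (⨅ Sm : Matrix (Fin d2) (Fin d1) ℝ,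
        ∫ ω, ‖g2 (Matrix.toEuclideanLin Sm (f1 (x ω))) - y ω‖ ^ 2 ∂P)
      ≤ R + κ2 ^ 2 * A2 + 2 * κ2 * Real.sqrt (A2 * R) :=
  minimal_linear_stitching_risk_bound_general P x hx y hy f1 f2 hf1 hf2 hf12 hf22 g2 κ2 hκ2 hg2 R hR
    hRint A2 hA2
end

section
/- Let (Ω, P) be a probability space with a random variable x in a measurable space X and y ∈ ℝ^t with E‖y‖² < ∞. Let F1 be a set of measurable maps X → ℝ^{d1} and G1 a set of maps ℝ^{d1} → ℝ^t, and define R(H1) = inf_{g ∈ G1, f ∈ F1} E‖g(f(x)) − y‖². Fix f1 ∈ F1 and fix a κ2-Lipschitz map g2 : ℝ^{d2} → ℝ^t and a measurable f2 : X → ℝ^{d2} with E‖f1(x)‖² < ∞, E‖f2(x)‖² < ∞, and R2 := E‖g2(f2(x)) − y‖² < ∞. Assume that { z ↦ g2(S z) : S ∈ ℝ^{d2×d1} } ⊆ G1, and set Ã2 := inf_{S ∈ ℝ^{d2×d1}} E‖S f1(x) − f2(x)‖². Then R(H1) − R2 ≤ inf_{S ∈ ℝ^{d2×d1}} E‖g2(S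 f1(x)) − y‖² − R2 ≤ κ2²·Ã2 + 2·κ2·√(Ã2·R2). In particular, the difference in risk between the two models is bounded by the misalignment of their representations. -/
/-!
Pointwise, the Lipschitz head gives `‖g2 (S f1) - y‖ ≤ κ2 ‖S f1 - f2‖ + ‖g2 f2 - y‖`. Squaring,
integrating and applying Cauchy–Schwarz to the cross term bounds the stitching risk of every
stitcher `S` by `κ2² a + 2 κ2 √(a R2) + R2`, where `a = E‖S f1 - f2‖²`. This bound is monotone and
continuous in `a`, so it passes to the infimum over `S`. The first inequality holds because every
stitched model is one of the models over which `R(H1)` is an infimum.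
-/

open MeasureTheory

noncomputable def misalignmentBound (κ R A : ℝ) : ℝ := κ ^ 2 * A + 2 * κ * √(A * R)

theorem ciInf_sub_le_misalignmentBound {ι : Sort*} [Nonempty ι] {I A : ι → ℝ} {κ R : ℝ}
    (hκ : 0 ≤ κ) (hR : 0 ≤ R) (hI : BddBelow (Set.range I)) (hA : BddBelow (Set.range A))
    (h : ∀ i, I i ≤ misalignmentBound κ R (A i) + R) :
    (⨅ i, I i) - R ≤ misalignmentBound κ R (⨅ i, A i) := by
  have hmono : Monotone (misalignmentBound κ R) := fun a b hab => by
    unfold misalignmentBound; gcongr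
  have hcont : Continuous (misalignmentBound κ R) := by
    unfold misalignmentBound; fun_prop
  rw [hmono.map_ciInf_of_continuousAt hcont.continuousAt hA]
  exact le_ciInf fun i => by linarith [ciInf_le hI i, h i]

namespace MeasureTheory

variable {Ω : Type*} [MeasurableSpace Ω] {P : Measure Ω}

theorem integral_mul_le_sqrt_integral_sq_mul_integral_sq {f g : Ω → ℝ}
    (hf0 : 0 ≤ᵐ[P] f) (hg0 : 0 ≤ᵐ[P] g) (hf : MemLp f 2 P) (hg : MemLp g 2 P) :
    ∫ ω, f ω * g ω ∂P ≤ √((∫ ω, f ω ^ 2 ∂P) * ∫ ω, g ω ^ 2 ∂P) := by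
  have hofReal : ENNReal.ofReal 2 = 2 := by norm_num
  have hHolder := integral_mul_le_Lp_mul_Lq_of_nonneg Real.HolderConjugate.two_two hf0 hg0
    (hofReal ▸ hf) (hofReal ▸ hg)
  simp only [Real.rpow_two, ← Real.sqrt_eq_rpow] at hHolder
  rwa [Real.sqrt_mul' _ (integral_nonneg fun ω => sq_nonneg (g ω))]

theorem integral_sq_le_misalignmentBound_of_abs_le_mul_add {U W V : Ω → ℝ} {κ : ℝ} (hκ : 0 ≤ κ)
    (hU : AEStronglyMeasurable U P) (hW : MemLp W 2 P) (hV : MemLp V 2 P)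
    (hW0 : 0 ≤ᵐ[P] W) (hV0 : 0 ≤ᵐ[P] V) (hUWV : ∀ᵐ ω ∂P, |U ω| ≤ κ * W ω + V ω) :
    ∫ ω, U ω ^ 2 ∂P
      ≤ misalignmentBound κ (∫ ω, V ω ^ 2 ∂P) (∫ ω, W ω ^ 2 ∂P) + ∫ ω, V ω ^ 2 ∂P := by
  have hW2 : Integrable (fun ω => W ω ^ 2) P := (memLp_two_iff_integrable_sq hW.1).1 hW
  have hV2 : Integrable (fun ω => V ω ^ 2) P := (memLp_two_iff_integrable_sq hV.1).1 hV
  have hκW2 : Integrable (fun ω => κ ^ 2 * W ω ^ 2) P := hW2.const_mul _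
  have hκWV : Integrable (fun ω => 2 * κ * (W ω * V ω)) P := (hW.integrable_mul hV).const_mul _
  have hbound := (hκW2.fun_add hκWV).fun_add hV2
  have hsq : ∀ᵐ ω ∂P, U ω ^ 2 ≤ κ ^ 2 * W ω ^ 2 + 2 * κ * (W ω * V ω) + V ω ^ 2 := by
    filter_upwards [hUWV] with ω hω
    calc U ω ^ 2 = |U ω| ^ 2 := (sq_abs _).symm
      _ ≤ (κ * W ω + V ω) ^ 2 := pow_le_pow_left₀ (abs_nonneg _) hω 2
      _ = _ := by ring
  have hU2 : Integrable (fun ω => U ω ^ 2) P := hbound.mono' (hU.pow 2) <| by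
    filter_upwards [hsq] with ω hω
    rwa [Real.norm_of_nonneg (sq_nonneg _)]
  calc ∫ ω, U ω ^ 2 ∂P
      ≤ ∫ ω, (κ ^ 2 * W ω ^ 2 + 2 * κ * (W ω * V ω) + V ω ^ 2) ∂P :=
        integral_mono_ae hU2 hbound hsq
    _ = κ ^ 2 * (∫ ω, W ω ^ 2 ∂P) + 2 * κ * (∫ ω, W ω * V ω ∂P) + ∫ ω, V ω ^ 2 ∂P := by
      rw [integral_add (hκW2.fun_add hκWV) hV2, integral_add hκW2 hκWV, integral_const_mul,
        integral_const_mul]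
    _ ≤ _ := by
      unfold misalignmentBound
      gcongr
      exact integral_mul_le_sqrt_integral_sq_mul_integral_sq hW0 hV0 hW hV

theorem integral_norm_comp_sub_sq_le_misalignmentBound {E F : Type*} [NormedAddCommGroup E]
    [NormedAddCommGroup F] {g : E → F} {K : NNReal} (hg : LipschitzWith K g) {u v : Ω → E}
    {y : Ω → F} (hu : AEStronglyMeasurable u P) (hy : AEStronglyMeasurable y P)
    (huv : MemLp (fun ω => u ω - v ω) 2 P) (hv : MemLp (fun ω => g (v ω) - y ω) 2 P) :
    ∫ ω, ‖g (u ω) - y ω‖ ^ 2 ∂P ≤ misalignmentBound K (∫ ω, ‖g (v ω) - y ω‖ ^ 2 ∂P)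
      (∫ ω, ‖u ω - v ω‖ ^ 2 ∂P) + ∫ ω, ‖g (v ω) - y ω‖ ^ 2 ∂P := by
  refine integral_sq_le_misalignmentBound_of_abs_le_mul_add K.2
    ((hg.continuous.comp_aestronglyMeasurable hu).sub hy).norm huv.norm hv.norm
    (ae_of_all _ fun _ => norm_nonneg _) (ae_of_all _ fun _ => norm_nonneg _)
    (ae_of_all _ fun ω => ?_)
  calc |‖g (u ω) - y ω‖| = ‖(g (u ω) - g (v ω)) + (g (v ω) - y ω)‖ := by
        rw [abs_norm, sub_add_sub_cancel]
    _ ≤ K * ‖u ω - v ω‖ + ‖g (v ω) - y ω‖ :=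
        (norm_add_le _ _).trans (add_le_add_left (hg.norm_sub_le _ _) _)

end MeasureTheory

theorem risk_difference_bounded_by_misalignment_general
    {Ω X : Type*} [MeasurableSpace Ω] [MeasurableSpace X]
    (P : Measure Ω)
    {t d1 d2 : ℕ} (x : Ω → X) (hx : Measurable x)
    (y : Ω → EuclideanSpace ℝ (Fin t)) (hy : Measurable y)
    (F1 : Set (X → EuclideanSpace ℝ (Fin d1)))
    (G1 : Set (EuclideanSpace ℝ (Fin d1) → EuclideanSpace ℝ (Fin t)))
    (f1 : X → EuclideanSpace ℝ (Fin d1)) (hf1 : f1 ∈ F1) (hf1m : Measurable f1)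
    (f2 : X → EuclideanSpace ℝ (Fin d2)) (hf2m : Measurable f2)
    (hf12 : Integrable (fun ω => ‖f1 (x ω)‖ ^ 2) P)
    (hf22 : Integrable (fun ω => ‖f2 (x ω)‖ ^ 2) P)
    (g2 : EuclideanSpace ℝ (Fin d2) → EuclideanSpace ℝ (Fin t))
    (κ2 : ℝ) (hκ2 : 0 ≤ κ2)
    (hg2 : ∀ z z', ‖g2 z - g2 z'‖ ≤ κ2 * ‖z - z'‖)
    (R2 : ℝ) (hR2 : R2 = ∫ ω, ‖g2 (f2 (x ω)) - y ω‖ ^ 2 ∂P)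
    (hR2int : Integrable (fun ω => ‖g2 (f2 (x ω)) - y ω‖ ^ 2) P)
    (hcomp : ∀ Sm : Matrix (Fin d2) (Fin d1) ℝ,
      (fun z => g2 (Matrix.toEuclideanLin Sm z)) ∈ G1)
    (A2 : ℝ) (hA2 : A2 = ⨅ Sm : Matrix (Fin d2) (Fin d1) ℝ,
        ∫ ω, ‖Matrix.toEuclideanLin Sm (f1 (x ω)) - f2 (x ω)‖ ^ 2 ∂P) :
    sInf {r : ℝ | ∃ g ∈ G1, ∃ f ∈ F1, r = ∫ ω, ‖g (f (x ω)) - y ω‖ ^ 2 ∂P} - R2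
        ≤ (⨅ Sm : Matrix (Fin d2) (Fin d1) ℝ,
            ∫ ω, ‖g2 (Matrix.toEuclideanLin Sm (f1 (x ω))) - y ω‖ ^ 2 ∂P) - R2 ∧
    (⨅ Sm : Matrix (Fin d2) (Fin d1) ℝ,
        ∫ ω, ‖g2 (Matrix.toEuclideanLin Sm (f1 (x ω))) - y ω‖ ^ 2 ∂P) - R2
      ≤ κ2 ^ 2 * A2 + 2 * κ2 * Real.sqrt (A2 * R2) := by
  constructor
  · refine sub_le_sub_right (le_ciInf fun Sm => csInf_le ?_ ?_) R2
    · exact ⟨0, by rintro _ ⟨g, -, f, -, rfl⟩; positivity⟩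
    · exact ⟨_, hcomp Sm, f1, hf1, rfl⟩
  have hg2L : LipschitzWith ⟨κ2, hκ2⟩ g2 :=
    LipschitzWith.of_dist_le_mul fun z z' => by
      rw [dist_eq_norm, dist_eq_norm]
      exact hg2 z z'
  have hf1L : MemLp (fun ω => f1 (x ω)) 2 P :=
    (memLp_two_iff_integrable_sq_norm (hf1m.comp hx).aestronglyMeasurable).2 hf12
  have hf2L : MemLp (fun ω => f2 (x ω)) 2 P :=
    (memLp_two_iff_integrable_sq_norm (hf2m.comp hx).aestronglyMeasurable).2 hf22
  have hR2L : MemLp (fun ω => g2 (f2 (x ω)) - y ω) 2 P :=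
    (memLp_two_iff_integrable_sq_norm
      ((hg2L.continuous.measurable.comp (hf2m.comp hx)).sub hy).aestronglyMeasurable).2 hR2int
  subst hR2 hA2
  refine ciInf_sub_le_misalignmentBound hκ2 (by positivity)
    ⟨0, by rintro _ ⟨_, rfl⟩; positivity⟩ ⟨0, by rintro _ ⟨_, rfl⟩; positivity⟩ fun Sm => ?_
  have hSf1L := hf1L.continuousLinearMap_comp (Matrix.toEuclideanLin Sm).toContinuousLinearMap
  exact integral_norm_comp_sub_sq_le_misalignmentBound hg2L hSf1L.1 hy.aestronglyMeasurable
    (hSf1L.sub hf2L) hR2L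

/-- Difference in risk is bounded by misalignment: if the
compositions `z ↦ g2(S z)` of the `κ2`-Lipschitz head `g2` with linear stitchers belong
to `G1` and `f1 ∈ F1`, then with `R2 = E‖g2(f2(x)) − y‖²` and
`Ã2 = inf_S E‖S f1(x) − f2(x)‖²` one has
`R(H1) − R2 ≤ inf_S E‖g2(S f1(x)) − y‖² − R2 ≤ κ2² Ã2 + 2 κ2 √(Ã2 R2)`. -/
theorem risk_difference_bounded_by_misalignment
    {Ω X : Type*} [MeasurableSpace Ω] [MeasurableSpace X]
    (P : Measure Ω) [IsProbabilityMeasure P]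
    {t d1 d2 : ℕ} (x : Ω → X) (hx : Measurable x)
    (y : Ω → EuclideanSpace ℝ (Fin t)) (hy : Measurable y)
    (hy2 : Integrable (fun ω => ‖y ω‖ ^ 2) P)
    (F1 : Set (X → EuclideanSpace ℝ (Fin d1)))
    (G1 : Set (EuclideanSpace ℝ (Fin d1) → EuclideanSpace ℝ (Fin t)))
    (f1 : X → EuclideanSpace ℝ (Fin d1)) (hf1 : f1 ∈ F1) (hf1m : Measurable f1)
    (f2 : X → EuclideanSpace ℝ (Fin d2)) (hf2m : Measurable f2)
    (hf12 : Integrable (fun ω => ‖f1 (x ω)‖ ^ 2) P)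
    (hf22 : Integrable (fun ω => ‖f2 (x ω)‖ ^ 2) P)
    (g2 : EuclideanSpace ℝ (Fin d2) → EuclideanSpace ℝ (Fin t))
    (κ2 : ℝ) (hκ2 : 0 ≤ κ2)
    (hg2 : ∀ z z', ‖g2 z - g2 z'‖ ≤ κ2 * ‖z - z'‖)
    (R2 : ℝ) (hR2 : R2 = ∫ ω, ‖g2 (f2 (x ω)) - y ω‖ ^ 2 ∂P)
    (hR2int : Integrable (fun ω => ‖g2 (f2 (x ω)) - y ω‖ ^ 2) P)
    (hcomp : ∀ Sm : Matrix (Fin d2) (Fin d1) ℝ,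
      (fun z => g2 (Matrix.toEuclideanLin Sm z)) ∈ G1)
    (A2 : ℝ) (hA2 : A2 = ⨅ Sm : Matrix (Fin d2) (Fin d1) ℝ,
        ∫ ω, ‖Matrix.toEuclideanLin Sm (f1 (x ω)) - f2 (x ω)‖ ^ 2 ∂P) :
    sInf {r : ℝ | ∃ g ∈ G1, ∃ f ∈ F1, r = ∫ ω, ‖g (f (x ω)) - y ω‖ ^ 2 ∂P} - R2
        ≤ (⨅ Sm : Matrix (Fin d2) (Fin d1) ℝ,
            ∫ ω, ‖g2 (Matrix.toEuclideanLin Sm (f1 (x ω))) - y ω‖ ^ 2 ∂P) - R2 ∧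
    (⨅ Sm : Matrix (Fin d2) (Fin d1) ℝ,
        ∫ ω, ‖g2 (Matrix.toEuclideanLin Sm (f1 (x ω))) - y ω‖ ^ 2 ∂P) - R2
      ≤ κ2 ^ 2 * A2 + 2 * κ2 * Real.sqrt (A2 * R2) :=
  risk_difference_bounded_by_misalignment_general P x hx y hy F1 G1 f1 hf1 hf1m f2 hf2m hf12 hf22 g2
    κ2 hκ2 hg2 R2 hR2 hR2int hcomp A2 hA2
end
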